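/- For fixed p ∈ (0, 0.5] and z ≥ 1, the function h(α) = ((1/p)z^α − 1/p + 1)^{1/α} is non-increasing in α > 0. Consequently, for an almost surely positive random variable X and 0 < α₁ ≤ α₂, p_{R,p}(X^{α₁}) ≤ p_{R,p}(X^{α₂}) and p_{L,p}(X^{α₂}) ≤ p_{L,p}(X^{α₁}). -/

import Mathlib

open Set MeasureTheory

/-- Cumulative distribution function of a law `μ` on `ℝ`. -/
noncomputable def cdf (μ : Measure ℝ) (x : ℝ) : ℝ := (μ (Iic x)).toReal

/-- Quantile (generalized inverse) function of `μ`. -/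
noncomputable def quantile (μ : Measure ℝ) (q : ℝ) : ℝ := sInf {x : ℝ | q ≤ cdf μ x}

/-- Theoretical `p`-left fence of `μ`. -/
noncomputable def Lfence (μ : Measure ℝ) (p : ℝ) : ℝ :=
  (1/p) * quantile μ p - ((1 - p)/p) * quantile μ (1 - p)

/-- Theoretical `p`-right fence of `μ`. -/
noncomputable def Rfence (μ : Measure ℝ) (p : ℝ) : ℝ :=
  (1/p) * quantile μ (1 - p) - ((1 - p)/p) * quantile μ p

/-- Probability of a left `p`-outside value. -/
noncomputable def pL (μ : Measure ℝ) (p : ℝ) : ℝ := (μ (Iio (Lfence μ p))).toReal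

/-- Probability of a right `p`-outside value. -/
noncomputable def pR (μ : Measure ℝ) (p : ℝ) : ℝ := (μ (Ioi (Rfence μ p))).toReal

/-! For `c ≥ 1` and `0 < a`, the quantity `(c * b ^ α - (c - 1) * a ^ α) ^ α⁻¹` is a power mean
of `b` and `a` with the weights `c` and `1 - c ≤ 0`; it is non-increasing in `α` by Jensen's
inequality for the convex map `t ↦ t ^ (β / α)`, since `b ^ α` is a convex combination of
`c * b ^ α - (c - 1) * a ^ α` and `a ^ α`. Pushing an a.s. positive law forward by `x ↦ x ^ α`
raises its quantiles to the power `α`, so with `a`, `b` the `p`- and `(1 - p)`-quantiles of `X`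
and `c = 1 / p` the right fence of `X ^ α` is `c * b ^ α - (c - 1) * a ^ α` (the left one has `a`
and `b` swapped), and `x ^ α` exceeds it iff `x` exceeds the power mean. -/

open Real

namespace Real

theorem mul_rpow_sub_le_rpow_mul_sub {c x y s : ℝ} (hc : 1 ≤ c) (hx : 0 ≤ x)
    (hxy : 0 ≤ c * y - (c - 1) * x) (hs : 1 ≤ s) :
    c * y ^ s - (c - 1) * x ^ s ≤ (c * y - (c - 1) * x) ^ s := by
  have hc0 : 0 < c := by linarith
  have hy_eq : c⁻¹ • (c * y - (c - 1) * x) + (1 - c⁻¹) • x = y := by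
    simp only [smul_eq_mul]; field_simp; ring
  have hjensen := (convexOn_rpow hs).2 (mem_Ici.2 hxy) (mem_Ici.2 hx)
    (inv_nonneg.2 hc0.le) (sub_nonneg.2 (inv_le_one_of_one_le₀ hc)) (add_sub_cancel _ _)
  rw [hy_eq, smul_eq_mul, smul_eq_mul] at hjensen
  have hscale : c * (c⁻¹ * (c * y - (c - 1) * x) ^ s + (1 - c⁻¹) * x ^ s)
      = (c * y - (c - 1) * x) ^ s + (c - 1) * x ^ s := by
    field_simp
  linarith [mul_le_mul_of_nonneg_left hjensen hc0.le]

theorem mul_rpow_sub_nonneg_of_le {c a b α β : ℝ} (hc : 0 ≤ c) (ha : 0 < a) (hb : 0 ≤ b)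
    (hα : 0 < α) (hαβ : α ≤ β) (hβ : 0 ≤ c * b ^ β - (c - 1) * a ^ β) :
    0 ≤ c * b ^ α - (c - 1) * a ^ α := by
  rcases le_total a b with hab | hba
  · have := rpow_le_rpow ha.le hab hα.le
    nlinarith [rpow_pos_of_pos ha α]
  · have hd : 0 < a ^ (β - α) := rpow_pos_of_pos ha _
    have hbd : b ^ (β - α) ≤ a ^ (β - α) := rpow_le_rpow hb hba (by linarith)
    have hsplit : ∀ x : ℝ, 0 ≤ x → x ^ β = x ^ α * x ^ (β - α) := fun x hx => by
      rw [← rpow_add' hx (by linarith), add_sub_cancel]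
    rw [hsplit a ha.le, hsplit b hb] at hβ
    have : 0 ≤ (c * b ^ α - (c - 1) * a ^ α) * a ^ (β - α) := by
      nlinarith [mul_nonneg (mul_nonneg hc (rpow_nonneg hb α)) (sub_nonneg.2 hbd)]
    exact nonneg_of_mul_nonneg_left this hd

theorem mul_rpow_sub_rpow_inv_le_of_le {c a b α β : ℝ} (hc : 1 ≤ c) (ha : 0 < a) (hb : 0 ≤ b)
    (hα : 0 < α) (hαβ : α ≤ β) (hβ : 0 ≤ c * b ^ β - (c - 1) * a ^ β) :
    (c * b ^ β - (c - 1) * a ^ β) ^ β⁻¹ ≤ (c * b ^ α - (c - 1) * a ^ α) ^ α⁻¹ := by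
  have hα' := mul_rpow_sub_nonneg_of_le (by linarith) ha hb hα hαβ hβ
  have hpow : ∀ x : ℝ, 0 ≤ x → (x ^ α) ^ (β / α) = x ^ β := fun x hx => by
    rw [← rpow_mul hx, mul_div_cancel₀ _ hα.ne']
  have hjensen := mul_rpow_sub_le_rpow_mul_sub hc (rpow_nonneg ha.le α) hα'
    ((one_le_div hα).2 hαβ)
  rw [hpow a ha.le, hpow b hb] at hjensen
  calc (c * b ^ β - (c - 1) * a ^ β) ^ β⁻¹
      ≤ ((c * b ^ α - (c - 1) * a ^ α) ^ (β / α)) ^ β⁻¹ :=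
        rpow_le_rpow hβ hjensen (inv_nonneg.2 (hα.trans_le hαβ).le)
    _ = (c * b ^ α - (c - 1) * a ^ α) ^ α⁻¹ := by
        rw [← rpow_mul hα']
        field_simp [(hα.trans_le hαβ).ne']

theorem mul_rpow_sub_lt_rpow_of_lt_of_le {c a b x α β : ℝ} (hc : 1 ≤ c) (ha : 0 < a)
    (hb : 0 ≤ b) (hx : 0 ≤ x) (hα : 0 < α) (hαβ : α ≤ β)
    (hβ : 0 ≤ c * b ^ β - (c - 1) * a ^ β) (h : c * b ^ α - (c - 1) * a ^ α < x ^ α) :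
    c * b ^ β - (c - 1) * a ^ β < x ^ β := by
  have hα' := mul_rpow_sub_nonneg_of_le (by linarith) ha hb hα hαβ hβ
  rw [← rpow_inv_lt_iff_of_pos hβ hx (hα.trans_le hαβ)]
  exact (mul_rpow_sub_rpow_inv_le_of_le hc ha hb hα hαβ hβ).trans_lt
    ((rpow_inv_lt_iff_of_pos hα' hx hα).2 h)

theorem rpow_lt_mul_rpow_sub_of_lt_of_le {c a b x α β : ℝ} (hc : 1 ≤ c) (ha : 0 < a)
    (hb : 0 ≤ b) (hx : 0 ≤ x) (hα : 0 < α) (hαβ : α ≤ β)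
    (h : x ^ β < c * b ^ β - (c - 1) * a ^ β) :
    x ^ α < c * b ^ α - (c - 1) * a ^ α := by
  have hβ : 0 ≤ c * b ^ β - (c - 1) * a ^ β := (rpow_nonneg hx β).trans h.le
  have hα' := mul_rpow_sub_nonneg_of_le (by linarith) ha hb hα hαβ hβ
  rw [← lt_rpow_inv_iff_of_pos hx hα' hα]
  exact ((lt_rpow_inv_iff_of_pos hx hβ (hα.trans_le hαβ)).2 h).trans_le
    (mul_rpow_sub_rpow_inv_le_of_le hc ha hb hα hαβ hβ)

end Real

section Quantile

variable {μ : Measure ℝ}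

theorem cdf_eq_zero_of_ae_lt {y : ℝ} (h : ∀ᵐ x ∂μ, y < x) : cdf μ y = 0 := by
  rw [cdf, (measure_eq_zero_iff_ae_notMem (s := Iic y)).2 (h.mono fun _ hx => not_le.2 hx),
    ENNReal.toReal_zero]

theorem cdf_map_rpow (hae : ∀ᵐ x ∂μ, 0 < x) {α y : ℝ} (hα : 0 < α) (hy : 0 < y) :
    cdf (μ.map (· ^ α)) y = cdf μ (y ^ α⁻¹) := by
  rw [cdf, cdf, Measure.map_apply (by fun_prop) measurableSet_Iic]
  congr 1
  refine measure_congr (Filter.eventuallyEq_set.2 (hae.mono fun x hx => ?_))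
  exact (le_rpow_inv_iff_of_pos hx.le hy.le hα).symm

variable [IsProbabilityMeasure μ] {q : ℝ}

theorem setOf_le_cdf_eq_Ici (hcont : Continuous (cdf μ)) (hq0 : 0 < q) (hq1 : q < 1) :
    {x | q ≤ cdf μ x} = Ici (quantile μ q) := by
  have hcdf : cdf μ = ProbabilityTheory.cdf μ :=
    funext fun x => (ProbabilityTheory.cdf_eq_real μ x).symm
  have hmono : Monotone (cdf μ) := hcdf ▸ ProbabilityTheory.monotone_cdf μ
  have hne : {x | q ≤ cdf μ x}.Nonempty :=
    ((hcdf ▸ ProbabilityTheory.tendsto_cdf_atTop μ).eventually (eventually_ge_nhds hq1)).exists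
  obtain ⟨x₀, hx₀⟩ := Filter.eventually_atBot.1
    ((hcdf ▸ ProbabilityTheory.tendsto_cdf_atBot μ).eventually (eventually_lt_nhds hq0))
  have hbdd : BddBelow {x | q ≤ cdf μ x} :=
    ⟨x₀, fun x hx => le_of_not_gt fun hlt => (hx₀ x hlt.le).not_ge hx⟩
  have hmem : quantile μ q ∈ {x | q ≤ cdf μ x} :=
    (isClosed_le continuous_const hcont).csInf_mem hne hbdd
  ext x
  exact ⟨fun hx => csInf_le hbdd hx, fun hx => hmem.trans (hmono hx)⟩

theorem le_cdf_quantile (hcont : Continuous (cdf μ)) (hq0 : 0 < q) (hq1 : q < 1) :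
    q ≤ cdf μ (quantile μ q) := by
  have hmem : quantile μ q ∈ Ici (quantile μ q) := self_mem_Ici
  rwa [← setOf_le_cdf_eq_Ici hcont hq0 hq1] at hmem

theorem quantile_le_quantile (hcont : Continuous (cdf μ)) {p : ℝ} (hp0 : 0 < p) (hpq : p ≤ q)
    (hq1 : q < 1) : quantile μ p ≤ quantile μ q := by
  rw [← mem_Ici, ← setOf_le_cdf_eq_Ici hcont hp0 (hpq.trans_lt hq1)]
  exact hpq.trans (le_cdf_quantile hcont (hp0.trans_le hpq) hq1)

theorem quantile_pos (hcont : Continuous (cdf μ)) (hae : ∀ᵐ x ∂μ, 0 < x) (hq0 : 0 < q)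
    (hq1 : q < 1) : 0 < quantile μ q := by
  by_contra! hQ
  have := le_cdf_quantile hcont hq0 hq1
  rw [cdf_eq_zero_of_ae_lt (hae.mono fun x hx => hQ.trans_lt hx)] at this
  linarith

theorem quantile_map_rpow (hcont : Continuous (cdf μ)) (hae : ∀ᵐ x ∂μ, 0 < x) {α : ℝ}
    (hα : 0 < α) (hq0 : 0 < q) (hq1 : q < 1) :
    quantile (μ.map (· ^ α)) q = quantile μ q ^ α := by
  have hQ := quantile_pos hcont hae hq0 hq1
  suffices {y | q ≤ cdf (μ.map (· ^ α)) y} = Ici (quantile μ q ^ α) by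
    rw [quantile, this, csInf_Ici]
  ext y
  change q ≤ cdf _ y ↔ quantile μ q ^ α ≤ y
  rcases le_or_gt y 0 with hy | hy
  · have hae_map : ∀ᵐ x ∂(μ.map (· ^ α)), y < x :=
      (ae_map_iff (by fun_prop) measurableSet_Ioi).2
        (hae.mono fun x hx => hy.trans_lt (rpow_pos_of_pos hx α))
    rw [cdf_eq_zero_of_ae_lt hae_map]
    exact iff_of_false hq0.not_ge (hy.trans_lt (rpow_pos_of_pos hQ α)).not_ge
  · rw [cdf_map_rpow hae hα hy, ← le_rpow_inv_iff_of_pos hQ.le hy.le hα,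
      ← mem_Ici (b := quantile μ q), ← setOf_le_cdf_eq_Ici hcont hq0 hq1]
    rfl

end Quantile

section Fences

variable {μ : Measure ℝ} [IsProbabilityMeasure μ] {p : ℝ}

theorem Rfence_map_rpow (hcont : Continuous (cdf μ)) (hae : ∀ᵐ x ∂μ, 0 < x) (hp0 : 0 < p)
    (hp1 : p < 1) {α : ℝ} (hα : 0 < α) :
    Rfence (μ.map (· ^ α)) p =
      1 / p * quantile μ (1 - p) ^ α - (1 / p - 1) * quantile μ p ^ α := by
  rw [Rfence, quantile_map_rpow hcont hae hα hp0 hp1,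
    quantile_map_rpow hcont hae hα (by linarith) (by linarith), sub_div, div_self hp0.ne']

theorem Lfence_map_rpow (hcont : Continuous (cdf μ)) (hae : ∀ᵐ x ∂μ, 0 < x) (hp0 : 0 < p)
    (hp1 : p < 1) {α : ℝ} (hα : 0 < α) :
    Lfence (μ.map (· ^ α)) p =
      1 / p * quantile μ p ^ α - (1 / p - 1) * quantile μ (1 - p) ^ α := by
  rw [Lfence, quantile_map_rpow hcont hae hα hp0 hp1,
    quantile_map_rpow hcont hae hα (by linarith) (by linarith), sub_div, div_self hp0.ne']

variable (hcont : Continuous (cdf μ)) (hae : ∀ᵐ x ∂μ, 0 < x) (hp0 : 0 < p) (hp2 : p ≤ 1 / 2)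
  {α₁ α₂ : ℝ} (hα₁ : 0 < α₁) (hα : α₁ ≤ α₂)
include hcont hae hp0 hp2 hα₁ hα

theorem pR_map_rpow_le_of_le : pR (μ.map (· ^ α₁)) p ≤ pR (μ.map (· ^ α₂)) p := by
  have hc : 1 ≤ 1 / p := by rw [le_div_iff₀ hp0]; linarith
  have ha := quantile_pos hcont hae hp0 (by linarith)
  have hb := quantile_pos hcont hae (q := 1 - p) (by linarith) (by linarith)
  have hab := quantile_le_quantile hcont hp0 (by linarith : p ≤ 1 - p) (by linarith)
  have hab' := rpow_le_rpow ha.le hab (hα₁.trans_le hα).le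
  rw [pR, pR, Rfence_map_rpow hcont hae hp0 (by linarith) hα₁,
    Rfence_map_rpow hcont hae hp0 (by linarith) (hα₁.trans_le hα),
    Measure.map_apply (by fun_prop) measurableSet_Ioi,
    Measure.map_apply (by fun_prop) measurableSet_Ioi]
  refine ENNReal.toReal_mono (measure_ne_top _ _) (measure_mono_ae (hae.mono fun x hx => ?_))
  exact mul_rpow_sub_lt_rpow_of_lt_of_le hc ha hb.le hx.le hα₁ hα
    (by nlinarith [rpow_pos_of_pos ha α₂])

theorem pL_map_rpow_le_of_le : pL (μ.map (· ^ α₂)) p ≤ pL (μ.map (· ^ α₁)) p := by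
  have hc : 1 ≤ 1 / p := by rw [le_div_iff₀ hp0]; linarith
  have ha := quantile_pos hcont hae hp0 (by linarith)
  have hb := quantile_pos hcont hae (q := 1 - p) (by linarith) (by linarith)
  rw [pL, pL, Lfence_map_rpow hcont hae hp0 (by linarith) hα₁,
    Lfence_map_rpow hcont hae hp0 (by linarith) (hα₁.trans_le hα),
    Measure.map_apply (by fun_prop) measurableSet_Iio,
    Measure.map_apply (by fun_prop) measurableSet_Iio]
  refine ENNReal.toReal_mono (measure_ne_top _ _) (measure_mono_ae (hae.mono fun x hx => ?_))
  exact rpow_lt_mul_rpow_sub_of_lt_of_le hc hb ha.le hx.le hα₁ hα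

end Fences

theorem power_monotone_outside_prob_general
    (μ : Measure ℝ) [IsProbabilityMeasure μ]
    (hpos : μ (Ioi (0:ℝ)) = 1)
    (hcont : Continuous (cdf μ))
    (p z : ℝ) (hp : p ∈ Ioc (0:ℝ) (1/2)) (hz : 1 ≤ z)
    (α₁ α₂ : ℝ) (hα₁ : 0 < α₁) (hα : α₁ ≤ α₂) :
    ((1/p) * z ^ α₂ - 1/p + 1) ^ (1/α₂) ≤ ((1/p) * z ^ α₁ - 1/p + 1) ^ (1/α₁) ∧
    pR (μ.map (fun x => x ^ α₁)) p ≤ pR (μ.map (fun x => x ^ α₂)) p ∧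
    pL (μ.map (fun x => x ^ α₂)) p ≤ pL (μ.map (fun x => x ^ α₁)) p := by
  obtain ⟨hp0, hp2⟩ := hp
  have hae : ∀ᵐ x ∂μ, 0 < x := mem_ae_iff.2 ((prob_compl_eq_zero_iff measurableSet_Ioi).2 hpos)
  refine ⟨?_, pR_map_rpow_le_of_le hcont hae hp0 hp2 hα₁ hα,
    pL_map_rpow_le_of_le hcont hae hp0 hp2 hα₁ hα⟩
  have hc : 1 ≤ 1 / p := by rw [le_div_iff₀ hp0]; linarith
  have hzα : 1 ≤ z ^ α₂ := one_le_rpow hz (hα₁.trans_le hα).le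
  have := mul_rpow_sub_rpow_inv_le_of_le hc zero_lt_one (zero_le_one.trans hz) hα₁ hα
    (by rw [one_rpow]; nlinarith)
  simpa only [one_rpow, mul_one, ← sub_add, one_div] using this

/-- For fixed `p ∈ (0, 1/2]` and `z ≥ 1`, the function
`h(α) = ((1/p)z^α − 1/p + 1)^(1/α)` is non-increasing in `α > 0`. Consequently,
for an a.s. positive `X` and `0 < α₁ ≤ α₂`, `p_{R,p}(X^{α₁}) ≤ p_{R,p}(X^{α₂})`
and `p_{L,p}(X^{α₂}) ≤ p_{L,p}(X^{α₁})`. -/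
theorem power_monotone_outside_prob
    (μ : Measure ℝ) [IsProbabilityMeasure μ] (hac : μ ≪ volume)
    (hpos : μ (Ioi (0:ℝ)) = 1)
    (hcont : Continuous (cdf μ)) (hsm : StrictMonoOn (cdf μ) (Ioi (0:ℝ)))
    (p z : ℝ) (hp : p ∈ Ioc (0:ℝ) (1/2)) (hz : 1 ≤ z)
    (α₁ α₂ : ℝ) (hα₁ : 0 < α₁) (hα : α₁ ≤ α₂) :
    ((1/p) * z ^ α₂ - 1/p + 1) ^ (1/α₂) ≤ ((1/p) * z ^ α₁ - 1/p + 1) ^ (1/α₁) ∧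
    pR (μ.map (fun x => x ^ α₁)) p ≤ pR (μ.map (fun x => x ^ α₂)) p ∧
    pL (μ.map (fun x => x ^ α₂)) p ≤ pL (μ.map (fun x => x ^ α₁)) p :=
  power_monotone_outside_prob_general μ hpos hcont p z hp hz α₁ α₂ hα₁ hα
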